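/- Let ℓ: ℝ^D → ℝ be convex and g_τ a SCAD-like penalty with constants a_0 ≥ a_1 > 0 and b_2 > b_1 > 0. Let β* ∈ ℝ^D have support graph 𝒢* (the graph on d vertices with an edge {i,j} iff β*_{(ij)} ≠ 0) with K* connected components C*_1, …, C*_{K*}, block support set S* = {(ij) : i, j in the same connected component of 𝒢*}, and largest component size d*_max. Let β̂^orc be the unique minimizer of ℓ(β) subject to β_{S*ᶜ} = 0, and assume ∇_{S*} ℓ(β̂^orc) = 0. Suppose b ∈ ℝ^D satisfies: (a) whenever i and j lie in the same connected component of the support graph of 𝒜(b), they lie in the same connected component of 𝒢*; (b) for every connected component C*_k of 𝒢* containing at least one edge, the second-smallest eigenvalue of ℒ(|b_{C*_k}|) is at least b_2 τ; and (c) ‖∇_{S*ᶜ} ℓ(β̂^orc)‖_max < a_0 τ / d*_max. Then the LLA step from b yields β̂^orc, i.e., β̂^orc is the unique minimizer of β ↦ ℓ(β) + ½ ℳ(V, g_τ'(λ))ᵀ|β| where (V, λ) is an eigendecomposition of ℒ(|b|). In particular, if β̂^orc itself satisfies (b) (with b replaced by β̂^orc) and (c), then β̂^orc is a fixed point of the LLA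 algorithm and hence a stationary point of the FCLS-penalized problem minimize ℓ(β) + ½ Σ_j g_τ(λ_j(ℒ(|β|))). -/

import Mathlib

open scoped BigOperators
open Matrix

namespace FCLS

/-- Edge index: pairs `(i, j)` with `i < j`. -/
abbrev EdgeIdx (d : ℕ) := {p : Fin d × Fin d // p.1 < p.2}

/-- Hollow symmetric adjacency matrix attached to an edge vector. -/
def adjM {d : ℕ} (x : EdgeIdx d → ℝ) : Matrix (Fin d) (Fin d) ℝ :=
  Matrix.of fun i j =>
    if h : i < j then x ⟨(i, j), h⟩ else if h' : j < i then x ⟨(j, i), h'⟩ else 0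

/-- Graph Laplacian of a square matrix. -/
def lapM {n : Type*} [Fintype n] [DecidableEq n] (A : Matrix n n ℝ) : Matrix n n ℝ :=
  Matrix.diagonal (fun i => ∑ j, A i j) - A

/-- Graph Laplacian of an edge vector. -/
def lap {d : ℕ} (x : EdgeIdx d → ℝ) : Matrix (Fin d) (Fin d) ℝ := lapM (adjM x)

/-- Eigenvalues sorted in nondecreasing order (`0` when not Hermitian). -/
noncomputable def eigs {n : Type*} [Fintype n] [DecidableEq n] (A : Matrix n n ℝ) :
    Fin (Fintype.card n) → ℝ :=
  if hA : A.IsHermitian then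
    (fun v : Fin (Fintype.card n) → ℝ => v ∘ Tuple.sort v)
      (hA.eigenvalues ∘ (Fintype.equivFin n).symm)
  else 0

/-- `j`-th smallest eigenvalue, `1`-indexed. -/
noncomputable def eigAsc {n : Type*} [Fintype n] [DecidableEq n] (A : Matrix n n ℝ) (j : ℕ) : ℝ :=
  if h : j - 1 < Fintype.card n then eigs A ⟨j - 1, h⟩ else 0

/-- Laplacian coefficient `ℳ(V, w)`. -/
def lapCoeff {d K : ℕ} (V : Matrix (Fin d) (Fin K) ℝ) (w : Fin K → ℝ) : EdgeIdx d → ℝ :=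
  fun e => ∑ k, w k * (V e.1.1 k - V e.1.2 k) ^ 2

/-- Support graph of an edge vector. -/
def suppGraph {d : ℕ} (x : EdgeIdx d → ℝ) : SimpleGraph (Fin d) :=
  SimpleGraph.fromRel fun i j => ∃ h : i < j, x ⟨(i, j), h⟩ ≠ 0

/-- Support graph of a square matrix. -/
def suppGraphM {d : ℕ} (A : Matrix (Fin d) (Fin d) ℝ) : SimpleGraph (Fin d) :=
  SimpleGraph.fromRel fun i j => A i j ≠ 0

/-- Block support: edges whose endpoints lie in a common connected component
of the support graph. -/
def blockSupp {d : ℕ} (x : EdgeIdx d → ℝ) : Set (EdgeIdx d) :=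
  {e | (suppGraph x).Reachable e.1.1 e.1.2}

/-- Number of vertices in the connected component of `i`. -/
noncomputable def compCard {d : ℕ} (G : SimpleGraph (Fin d)) (i : Fin d) : ℕ :=
  Nat.card {j : Fin d // G.Reachable i j}

/-- Largest connected-component size. -/
noncomputable def maxCompCard {d : ℕ} (G : SimpleGraph (Fin d)) : ℕ :=
  Finset.univ.sup fun i => compCard G i

/-- Number of connected components. -/
noncomputable def numComp {d : ℕ} (G : SimpleGraph (Fin d)) : ℕ :=
  Nat.card G.ConnectedComponent

open Classical in
/-- Restriction of an edge vector to edges inside a vertex set. -/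
noncomputable def restrictE {d : ℕ} (x : EdgeIdx d → ℝ) (S : Set (Fin d)) : EdgeIdx d → ℝ :=
  fun e => if e.1.1 ∈ S ∧ e.1.2 ∈ S then x e else 0

/-- `j`-th smallest eigenvalue (1-indexed) of the Laplacian of the adjacency
submatrix on the vertex set `S`. -/
noncomputable def subLapEig {d : ℕ} (x : EdgeIdx d → ℝ) (S : Set (Fin d)) (j : ℕ) : ℝ :=
  letI : Fintype S := Fintype.ofFinite S
  eigAsc (lapM ((adjM x).submatrix (fun a : S => (a : Fin d)) fun a : S => (a : Fin d))) j

/-- Spectral (`ℓ2 → ℓ2` operator) norm of a matrix. -/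
noncomputable def opNorm {m n : Type*} [Fintype m] [Fintype n] [DecidableEq n]
    (A : Matrix m n ℝ) : ℝ :=
  ‖LinearMap.toContinuousLinearMap (Matrix.toEuclideanLin A)‖

/-- Entrywise `ℓ1` norm of a matrix. -/
noncomputable def matL1 {m n : Type*} [Fintype m] [Fintype n] (A : Matrix m n ℝ) : ℝ :=
  ∑ i, ∑ j, |A i j|

/-- Frobenius norm of a matrix. -/
noncomputable def frob {m n : Type*} [Fintype m] [Fintype n] (A : Matrix m n ℝ) : ℝ :=
  Real.sqrt (∑ i, ∑ j, A i j ^ 2)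

/-- `ℓ1 → ℓ1` operator norm: maximal absolute row sum. -/
noncomputable def opOne {m n : Type*} [Fintype m] [Fintype n] (A : Matrix m n ℝ) : ℝ :=
  ⨆ i, ∑ j, |A i j|

/-- `ℓ2 → ℓ∞` operator norm: maximal Euclidean row norm. -/
noncomputable def twoInf {m n : Type*} [Fintype m] [Fintype n] (A : Matrix m n ℝ) : ℝ :=
  ⨆ i, Real.sqrt (∑ j, A i j ^ 2)

/-- Max (absolute) entry of a vector. -/
noncomputable def vecMax {ι : Type*} [Fintype ι] (v : ι → ℝ) : ℝ := ⨆ i, |v i|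

/-- `ℓ1` norm of a vector. -/
noncomputable def l1 {ι : Type*} [Fintype ι] (v : ι → ℝ) : ℝ := ∑ i, |v i|

/-- `ℓ2` norm of a vector. -/
noncomputable def l2 {ι : Type*} [Fintype ι] (v : ι → ℝ) : ℝ := Real.sqrt (∑ i, v i ^ 2)

/-- SCAD-like folded concave penalty `g` with (within-domain) derivative `g'`. -/
structure SCADLike (g g' : ℝ → ℝ) (a0 a1 b1 b2 τ : ℝ) : Prop where
  a1_le_a0 : a1 ≤ a0
  a1_pos : 0 < a1
  b1_pos : 0 < b1
  b1_lt_b2 : b1 < b2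
  map_zero : g 0 = 0
  mono : MonotoneOn g (Set.Ici 0)
  concave : ConcaveOn ℝ (Set.Ici 0) g
  hasDeriv : ∀ t ∈ Set.Ici (0 : ℝ), HasDerivWithinAt g (g' t) (Set.Ici 0) t
  deriv_zero : g' 0 = a0 * τ
  deriv_low : ∀ t : ℝ, 0 < t → t ≤ b1 * τ → a1 * τ ≤ g' t
  deriv_high : ∀ t : ℝ, b2 * τ ≤ t → g' t = 0

/-- `(V, lam)` is an orthonormal eigendecomposition of `A`. -/
def IsEigenDecomp {d : ℕ} (A V : Matrix (Fin d) (Fin d) ℝ) (lam : Fin d → ℝ) : Prop :=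
  Vᵀ * V = 1 ∧ ∀ k, A *ᵥ (fun i => V i k) = lam k • fun i => V i k

/-- LLA surrogate objective with weight vector `M`. -/
noncomputable def llaObj {d : ℕ} (ℓ : (EdgeIdx d → ℝ) → ℝ) (M β : EdgeIdx d → ℝ) : ℝ :=
  ℓ β + (1 / 2) * ∑ e, M e * |β e|

/-- `out` is the output of one LLA step from `b` (for some orthonormal
eigendecomposition of `ℒ(|b|)`). -/
def LLAStep {d : ℕ} (ℓ : (EdgeIdx d → ℝ) → ℝ) (g' : ℝ → ℝ) (b out : EdgeIdx d → ℝ) : Prop :=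
  ∃ V lam, IsEigenDecomp (lap fun e => |b e|) V lam ∧
    ∀ β, llaObj ℓ (lapCoeff V fun k => g' (lam k)) out ≤
      llaObj ℓ (lapCoeff V fun k => g' (lam k)) β

/-- `β` solves the weighted Lasso block-oracle problem with weights `w`. -/
def OrcLassoSol {d : ℕ} (ℓ : (EdgeIdx d → ℝ) → ℝ) (S : Set (EdgeIdx d))
    (w β : EdgeIdx d → ℝ) : Prop :=
  (∀ e ∉ S, β e = 0) ∧
  ∀ γ : EdgeIdx d → ℝ, (∀ e ∉ S, γ e = 0) →
    ℓ β + (1 / 2) * ∑ e, w e * |β e| ≤ ℓ γ + (1 / 2) * ∑ e, w e * |γ e|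

/-- The set `T_op(ρ, τ)` of weighted-Lasso-oracle solutions with small weights. -/
def TopSet {d : ℕ} (ℓ : (EdgeIdx d → ℝ) → ℝ) (S : Set (EdgeIdx d))
    (a0 τ ρ : ℝ) : Set (EdgeIdx d → ℝ) :=
  {β | ∃ w : EdgeIdx d → ℝ, (∀ e, 0 ≤ w e) ∧ (∀ e ∉ S, w e = 0) ∧
      (∀ e, w e ≤ 2 ^ 5 * a0 * τ * ρ ^ 2) ∧ OrcLassoSol ℓ S w β}

/-!
With `V` an orthonormal eigenbasis of `ℒ(|b|)`, the LLA weight of the edge `(ij)` is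
`∑ₖ g'(λₖ) (V i k - V j k)²`. Since the blocks of `b` refine those of `β*`, `ℒ(|b|)` splits
along the components of `𝒢*`; there the spectral gap `b₂τ` forces every eigenvector with
`λₖ < b₂τ` to be constant, while `g'` vanishes on `[b₂τ, ∞)`, so the weights vanish on `S*`.
For `(ij) ∉ S*` the difference of the indicators of the components of `i` and `j` lies in the
kernel, and Cauchy–Schwarz over the kernel eigenvectors bounds the weight below by
`2 a₀τ / d*_max`, more than twice the gradient there. Finally, a convex loss whose restricted
minimizer is stationary along `S*` keeps it as unique minimizer once every coordinate
off `S*` is penalized by more than twice its partial derivative.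
-/

open Finset

section Laplacian

variable {n : Type*} [Fintype n] [DecidableEq n]

lemma lapM_mulVec_apply (A : Matrix n n ℝ) (u : n → ℝ) (i : n) :
    (lapM A *ᵥ u) i = (∑ j, A i j) * u i - ∑ j, A i j * u j := by
  rw [lapM, sub_mulVec, Pi.sub_apply, mulVec_diagonal]
  simp [mulVec, dotProduct]

lemma lapM_isSymm {A : Matrix n n ℝ} (hA : A.IsSymm) : (lapM A).IsSymm :=
  (isSymm_diagonal _).sub hA

lemma lapM_mulVec_one (A : Matrix n n ℝ) : lapM A *ᵥ 1 = 0 := by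
  funext i
  simp [lapM_mulVec_apply]

lemma lapM_mulVec_indicator (A : Matrix n n ℝ) (S : Finset n)
    (hS : ∀ x y, A x y ≠ 0 → (x ∈ S ↔ y ∈ S)) :
    lapM A *ᵥ (fun x => if x ∈ S then 1 else 0) = 0 := by
  funext x
  have hrow : ∀ y, A x y * (if y ∈ S then 1 else 0) = if x ∈ S then A x y else 0 := by
    intro y
    by_cases hxy : A x y = 0
    · simp [hxy]
    · simp [(hS x y hxy).symm]
  simp only [lapM_mulVec_apply, hrow]
  split_ifs <;> simp

lemma dotProduct_lapM_mulVec_self_nonneg {A : Matrix n n ℝ} (hA : A.IsSymm)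
    (hA0 : ∀ i j, 0 ≤ A i j) (u : n → ℝ) : 0 ≤ u ⬝ᵥ (lapM A *ᵥ u) := by
  have hQ : u ⬝ᵥ (lapM A *ᵥ u) = ∑ i, ∑ j, A i j * (u i ^ 2 - u i * u j) := by
    simp only [dotProduct, lapM_mulVec_apply, sum_mul, mul_sub, mul_sum,
      ← sum_sub_distrib]
    exact sum_congr rfl fun i _ => sum_congr rfl fun j _ => by ring
  have hQ' : u ⬝ᵥ (lapM A *ᵥ u) = ∑ i, ∑ j, A i j * (u j ^ 2 - u i * u j) := by
    rw [hQ, sum_comm]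
    exact sum_congr rfl fun i _ => sum_congr rfl fun j _ => by
      rw [hA.apply]; ring
  have h2 : 2 * (u ⬝ᵥ (lapM A *ᵥ u)) = ∑ i, ∑ j, A i j * (u i - u j) ^ 2 := by
    rw [two_mul]
    nth_rewrite 1 [hQ]
    rw [hQ', ← sum_add_distrib]
    exact sum_congr rfl fun i _ => by
      rw [← sum_add_distrib]
      exact sum_congr rfl fun j _ => by ring
  have : 0 ≤ ∑ i, ∑ j, A i j * (u i - u j) ^ 2 :=
    sum_nonneg fun i _ => sum_nonneg fun j _ => mul_nonneg (hA0 i j) (sq_nonneg _)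
  linarith

lemma lapM_submatrix_mulVec (A : Matrix n n ℝ) (S : Set n) [Fintype S]
    (hS : ∀ x ∈ S, ∀ y ∉ S, A x y = 0) (u : n → ℝ) :
    lapM (A.submatrix ((↑) : S → n) (↑)) *ᵥ (u ∘ (↑)) = (lapM A *ᵥ u) ∘ (↑) := by
  have hsum : ∀ x : S, ∀ f : n → ℝ,
      ∑ y : S, A x y * f y = ∑ y, A x y * f y := by
    intro x f
    rw [← sum_subtype S.toFinset (fun _ => Set.mem_toFinset) (fun y => A x y * f y)]
    refine sum_subset (subset_univ _) fun y _ hy => ?_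
    rw [hS x x.2 y (by simpa using hy), zero_mul]
  funext x
  have h1 := hsum x 1
  simp only [Pi.one_apply, mul_one] at h1
  simp only [lapM_mulVec_apply, Function.comp_apply, Matrix.submatrix_apply, h1, hsum x u]

structure IsOrthEigenbasis (B U : Matrix n n ℝ) (μ : n → ℝ) : Prop where
  transpose_mul_self : Uᵀ * U = 1
  mulVec_col : ∀ k, B *ᵥ Uᵀ k = μ k • Uᵀ k

namespace IsOrthEigenbasis

variable {B U : Matrix n n ℝ} {μ : n → ℝ}

lemma of_isHermitian (hB : B.IsHermitian) :
    IsOrthEigenbasis B hB.eigenvectorUnitary hB.eigenvalues where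
  transpose_mul_self := by
    rw [← conjTranspose_eq_transpose_of_trivial]
    exact Unitary.coe_star_mul_self hB.eigenvectorUnitary
  mulVec_col k := by
    rw [hB.eigenvectorUnitary_transpose_apply]
    exact hB.mulVec_eigenvectorBasis k

variable (h : IsOrthEigenbasis B U μ)
include h

lemma mulVec_transpose_mulVec (v : n → ℝ) : U *ᵥ (Uᵀ *ᵥ v) = v := by
  rw [mulVec_mulVec, mul_eq_one_comm.mp h.transpose_mul_self, one_mulVec]

lemma dotProduct_transpose_mulVec (v w : n → ℝ) :
    (Uᵀ *ᵥ v) ⬝ᵥ (Uᵀ *ᵥ w) = v ⬝ᵥ w := by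
  rw [dotProduct_mulVec, vecMul_transpose, h.mulVec_transpose_mulVec]

lemma eigenvalue_eq (k : n) : μ k = Uᵀ k ⬝ᵥ (B *ᵥ Uᵀ k) := by
  have h1 : Uᵀ k ⬝ᵥ Uᵀ k = 1 := by
    have := congrFun (congrFun h.transpose_mul_self k) k
    rwa [mul_apply', one_apply_eq] at this
  rw [h.mulVec_col, dotProduct_smul, h1, smul_eq_mul, mul_one]

lemma transpose_mulVec_eq_zero (hB : B.IsSymm) {v : n → ℝ} {a : ℝ} (hv : B *ᵥ v = a • v)
    {k : n} (hk : μ k ≠ a) : (Uᵀ *ᵥ v) k = 0 := by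
  have h1 : Uᵀ k ⬝ᵥ (B *ᵥ v) = μ k * (Uᵀ k ⬝ᵥ v) := by
    rw [dotProduct_mulVec, ← mulVec_transpose, hB.eq, h.mulVec_col, smul_dotProduct, smul_eq_mul]
  rw [hv, dotProduct_smul, smul_eq_mul] at h1
  have h2 : (μ k - a) * (Uᵀ k ⬝ᵥ v) = 0 := by linarith
  exact (mul_eq_zero.mp h2).resolve_left (sub_ne_zero.mpr hk)

end IsOrthEigenbasis

section Spectrum

variable {B : Matrix n n ℝ}

lemma eq_of_eigenvalues_lt_eigAsc_two (hB : B.IsHermitian) {k l : n}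
    (hk : hB.eigenvalues k < eigAsc B 2) (hl : hB.eigenvalues l < eigAsc B 2) : k = l := by
  by_cases hcard : 2 - 1 < Fintype.card n
  swap
  · have : Subsingleton n := Fintype.card_le_one_iff_subsingleton.mp (by omega)
    exact Subsingleton.elim k l
  set E := Fintype.equivFin n
  set μ := hB.eigenvalues ∘ E.symm
  set σ := Tuple.sort μ
  have hgap : eigAsc B 2 = μ (σ ⟨1, hcard⟩) := by
    rw [eigAsc, dif_pos hcard, eigs, dif_pos hB]
    rfl
  -- the only sorted position whose eigenvalue can lie below the second smallest one is `0`
  have hpos : ∀ m, hB.eigenvalues m < eigAsc B 2 → (σ.symm (E m) : ℕ) = 0 := by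
    intro m hm
    by_contra hne
    have hle : (⟨1, hcard⟩ : Fin _) ≤ σ.symm (E m) := Fin.le_def.mpr (Nat.one_le_iff_ne_zero.mpr hne)
    have := Tuple.monotone_sort μ hle
    rw [Function.comp_apply, Function.comp_apply, Equiv.apply_symm_apply, ← hgap] at this
    simp only [μ, Function.comp_apply, Equiv.symm_apply_apply] at this
    linarith
  exact E.injective (σ.symm.injective (Fin.ext ((hpos k hk).trans (hpos l hl).symm)))

lemma exists_eq_smul_of_lt_eigAsc_two (hB : B.IsHermitian) {u v : n → ℝ} {a c : ℝ}
    (hu : B *ᵥ u = a • u) (ha : a < eigAsc B 2) (hv : B *ᵥ v = c • v) (hc : c < eigAsc B 2)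
    (hv0 : v ≠ 0) : ∃ t : ℝ, u = t • v := by
  have h := IsOrthEigenbasis.of_isHermitian hB
  have hBs : B.IsSymm := isHermitian_iff_isSymm.mp hB
  set U : Matrix n n ℝ := (hB.eigenvectorUnitary : Matrix n n ℝ)
  obtain ⟨k, hk⟩ : ∃ k, (Uᵀ *ᵥ v) k ≠ 0 := by
    by_contra! hall
    apply hv0
    rw [← h.mulVec_transpose_mulVec v, show Uᵀ *ᵥ v = 0 from funext hall, mulVec_zero]
  have hμk : hB.eigenvalues k = c := by
    by_contra hne
    exact hk (h.transpose_mulVec_eq_zero hBs hv hne)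
  -- both coefficient vectors are supported on the unique eigenvalue index below the gap
  have hsupp : ∀ {w : n → ℝ} {b : ℝ}, B *ᵥ w = b • w → b < eigAsc B 2 →
      ∀ l ≠ k, (Uᵀ *ᵥ w) l = 0 := by
    intro w b hw hb l hl
    refine h.transpose_mulVec_eq_zero hBs hw fun hμl => hl ?_
    exact eq_of_eigenvalues_lt_eigAsc_two hB (hμl ▸ hb) (hμk ▸ hc)
  set t := (Uᵀ *ᵥ u) k / (Uᵀ *ᵥ v) k
  have hcoef : Uᵀ *ᵥ u = t • (Uᵀ *ᵥ v) := by
    funext l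
    rcases eq_or_ne l k with rfl | hl
    · simp [t, div_mul_cancel₀ _ hk]
    · simp [hsupp hu ha l hl, hsupp hv hc l hl]
  refine ⟨t, ?_⟩
  rw [← h.mulVec_transpose_mulVec u, hcoef, mulVec_smul, h.mulVec_transpose_mulVec]

lemma IsOrthEigenbasis.sq_dotProduct_le_mul_sum_ker {U : Matrix n n ℝ} {μ : n → ℝ}
    (h : IsOrthEigenbasis B U μ) (hB : B.IsSymm) {u : n → ℝ} (hu : B *ᵥ u = 0) (y : n → ℝ) :
    (u ⬝ᵥ y) ^ 2 ≤ (u ⬝ᵥ u) * ∑ k ∈ univ.filter (μ · = 0), (Uᵀ *ᵥ y) k ^ 2 := by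
  set Z := univ.filter (μ · = 0)
  have hu0 : ∀ k ∉ Z, (Uᵀ *ᵥ u) k = 0 := fun k hk =>
    h.transpose_mulVec_eq_zero hB (a := 0) (by rw [hu, zero_smul]) (by simpa [Z] using hk)
  have huy : u ⬝ᵥ y = ∑ k ∈ Z, (Uᵀ *ᵥ u) k * (Uᵀ *ᵥ y) k := by
    rw [← h.dotProduct_transpose_mulVec, dotProduct]
    exact (sum_subset (subset_univ Z) fun k _ hk => by rw [hu0 k hk, zero_mul]).symm
  have huu : ∑ k ∈ Z, (Uᵀ *ᵥ u) k ^ 2 ≤ u ⬝ᵥ u := by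
    rw [← h.dotProduct_transpose_mulVec, dotProduct]
    simp_rw [← sq]
    exact sum_le_sum_of_subset_of_nonneg (subset_univ Z) fun k _ _ => sq_nonneg _
  rw [huy]
  exact (sum_mul_sq_le_sq_mul_sq Z _ _).trans
    (mul_le_mul_of_nonneg_right huu (sum_nonneg fun _ _ => sq_nonneg _))

end Spectrum

section LaplacianSpectrum

variable {A : Matrix n n ℝ}

lemma eq_of_lapM_mulVec_eq_smul_of_lt_eigAsc_two (hA : A.IsSymm) (S : Set n) [Fintype S]
    (hS : ∀ x ∈ S, ∀ y ∉ S, A x y = 0)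
    (hgap : 0 < eigAsc (lapM (A.submatrix ((↑) : S → n) (↑))) 2)
    {u : n → ℝ} {a : ℝ} (hu : lapM A *ᵥ u = a • u)
    (ha : a < eigAsc (lapM (A.submatrix ((↑) : S → n) (↑))) 2)
    {i j : n} (hi : i ∈ S) (hj : j ∈ S) : u i = u j := by
  have hB := isHermitian_iff_isSymm.mpr (lapM_isSymm (hA.submatrix ((↑) : S → n)))
  have hrestr : lapM (A.submatrix ((↑) : S → n) (↑)) *ᵥ (u ∘ (↑)) = a • (u ∘ (↑)) := by
    rw [lapM_submatrix_mulVec A S hS, hu]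
    rfl
  have hone : lapM (A.submatrix ((↑) : S → n) (↑)) *ᵥ 1 = (0 : ℝ) • 1 := by
    rw [lapM_mulVec_one, zero_smul]
  have hone0 : (1 : S → ℝ) ≠ 0 := fun h => one_ne_zero (congrFun h ⟨i, hi⟩)
  obtain ⟨t, ht⟩ := exists_eq_smul_of_lt_eigAsc_two hB hrestr ha hone hgap hone0
  have hi' := congrFun ht ⟨i, hi⟩
  have hj' := congrFun ht ⟨j, hj⟩
  simp only [Function.comp_apply, Pi.smul_apply, Pi.one_apply, smul_eq_mul, mul_one] at hi' hj'
  rw [hi', hj']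

lemma dotProduct_indicator_sub_indicator_self {S T : Finset n} (hST : Disjoint S T) :
    ((fun x => if x ∈ S then (1 : ℝ) else 0) - fun x => if x ∈ T then (1 : ℝ) else 0) ⬝ᵥ
      ((fun x => if x ∈ S then (1 : ℝ) else 0) - fun x => if x ∈ T then (1 : ℝ) else 0) =
      #S + #T := by
  have hterm : ∀ x, ((if x ∈ S then (1 : ℝ) else 0) - if x ∈ T then 1 else 0) *
      ((if x ∈ S then (1 : ℝ) else 0) - if x ∈ T then 1 else 0) =
      (if x ∈ S then 1 else 0) + if x ∈ T then 1 else 0 := by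
    intro x
    by_cases hxS : x ∈ S
    · simp [hxS, disjoint_left.mp hST hxS]
    · by_cases hxT : x ∈ T <;> simp [hxS, hxT]
  simp only [dotProduct, Pi.sub_apply, hterm, sum_add_distrib, sum_boole, filter_mem_eq_inter,
    univ_inter]

lemma IsOrthEigenbasis.four_le_mul_sum_ker {U : Matrix n n ℝ} {μ : n → ℝ} (hA : A.IsSymm)
    (h : IsOrthEigenbasis (lapM A) U μ) {S T : Finset n} (hST : Disjoint S T)
    (hS : ∀ x y, A x y ≠ 0 → (x ∈ S ↔ y ∈ S)) (hT : ∀ x y, A x y ≠ 0 → (x ∈ T ↔ y ∈ T))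
    {i j : n} (hi : i ∈ S) (hj : j ∈ T) :
    4 ≤ (#S + #T : ℝ) * ∑ k ∈ univ.filter (μ · = 0), (U i k - U j k) ^ 2 := by
  set u : n → ℝ := (fun x => if x ∈ S then 1 else 0) - fun x => if x ∈ T then 1 else 0
  have hu : lapM A *ᵥ u = 0 := by
    rw [mulVec_sub, lapM_mulVec_indicator A S hS, lapM_mulVec_indicator A T hT, sub_zero]
  have hCS := h.sq_dotProduct_le_mul_sum_ker (lapM_isSymm hA) hu
    (Pi.single i 1 - Pi.single j 1)
  have huy : u ⬝ᵥ (Pi.single i 1 - Pi.single j 1) = 2 := by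
    simp [u, dotProduct_sub, hi, hj, disjoint_left.mp hST hi,
      disjoint_right.mp hST hj]
    norm_num
  have hcoef : ∀ k, (Uᵀ *ᵥ (Pi.single i 1 - Pi.single j 1)) k = U i k - U j k := by
    intro k
    simp [mulVec_sub]
  rw [huy, dotProduct_indicator_sub_indicator_self hST] at hCS
  simp only [hcoef] at hCS
  linarith [show (2 : ℝ) ^ 2 = 4 by norm_num]

end LaplacianSpectrum

end Laplacian

lemma SCADLike.deriv_nonneg {g g' : ℝ → ℝ} {a0 a1 b1 b2 τ : ℝ}
    (hg : SCADLike g g' a0 a1 b1 b2 τ) {t : ℝ} (ht : 0 ≤ t) : 0 ≤ g' t := by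
  have hacc : AccPt t (Filter.principal (Set.Ici 0)) := by
    rw [accPt_principal_iff_nhdsWithin]
    exact (inferInstance : (nhdsWithin t (Set.Ioi t)).NeBot).mono
      (nhdsWithin_mono t fun s (hs : t < s) => ⟨ht.trans hs.le, hs.ne'⟩)
  exact (hg.hasDeriv t ht).nonneg_of_monotoneOn hacc hg.mono

lemma _root_.ConvexOn.add_fderiv_sub_le {E : Type*} [NormedAddCommGroup E] [NormedSpace ℝ E]
    {f : E → ℝ} (hf : ConvexOn ℝ Set.univ f) {x : E} (hx : DifferentiableAt ℝ f x) (y : E) :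
    f x + fderiv ℝ f x (y - x) ≤ f y := by
  set φ : ℝ → ℝ := fun t => f (x + t • (y - x))
  have hφ : ConvexOn ℝ Set.univ φ := by
    have := hf.comp_affineMap (AffineMap.lineMap x y)
    rw [Set.preimage_univ] at this
    have hline : φ = f ∘ AffineMap.lineMap x y := by
      funext t
      simp [φ, AffineMap.lineMap_apply, add_comm]
    rwa [hline]
  have hderiv : HasDerivAt φ (fderiv ℝ f x (y - x)) 0 := by
    have hline : HasDerivAt (fun t : ℝ => x + t • (y - x)) (y - x) 0 := by
      simpa using ((hasDerivAt_id (0 : ℝ)).smul_const (y - x)).const_add x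
    have hx' : HasFDerivAt f (fderiv ℝ f x) (x + (0 : ℝ) • (y - x)) := by
      simpa using hx.hasFDerivAt
    exact hx'.comp_hasDerivAt 0 hline
  have := hφ.le_slope_of_hasDerivAt (Set.mem_univ 0) (Set.mem_univ 1) one_pos hderiv
  simp only [slope_def_field, φ, sub_zero, div_one, zero_smul, add_zero, one_smul,
    add_sub_cancel] at this
  linarith

lemma _root_.ContinuousLinearMap.apply_eq_sum_mul_single {ι : Type*} [Fintype ι] [DecidableEq ι]
    (f : (ι → ℝ) →L[ℝ] ℝ) (v : ι → ℝ) : f v = ∑ i, v i * f (Pi.single i 1) := by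
  conv_lhs => rw [pi_eq_sum_univ' v]
  simp [map_sum]

section LLAObjective

variable {d : ℕ} {ℓ : (EdgeIdx d → ℝ) → ℝ} {S : Set (EdgeIdx d)} {M : EdgeIdx d → ℝ}

lemma llaObj_eq_of_support (hMS : ∀ e ∈ S, M e = 0) {β : EdgeIdx d → ℝ}
    (hβ : ∀ e ∉ S, β e = 0) : llaObj ℓ M β = ℓ β := by
  refine (add_eq_left.mpr ?_)
  refine mul_eq_zero_of_right _ (sum_eq_zero fun e _ => ?_)
  by_cases he : e ∈ S
  · rw [hMS e he, zero_mul]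
  · rw [hβ e he, abs_zero, mul_zero]

/-- By the gradient inequality at `x`, `ℓ β - ℓ x ≥ ∑_{e ∉ S} β e * ∂ₑℓ(x)`, and the penalty
`½ ∑ M e * |β e|` strictly dominates the absolute value of that sum unless `β` is supported
on `S`. -/
lemma llaObj_lt_of_weights (hconv : ConvexOn ℝ Set.univ ℓ) {x : EdgeIdx d → ℝ}
    (hdiff : DifferentiableAt ℝ ℓ x) (hx : ∀ e ∉ S, x e = 0)
    (hmin : ∀ β : EdgeIdx d → ℝ, (∀ e ∉ S, β e = 0) → β ≠ x → ℓ x < ℓ β)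
    (hfoc : ∀ e ∈ S, fderiv ℝ ℓ x (Pi.single e 1) = 0) (hMS : ∀ e ∈ S, M e = 0)
    (hMc : ∀ e ∉ S, 2 * |fderiv ℝ ℓ x (Pi.single e 1)| < M e)
    (β : EdgeIdx d → ℝ) (hβ : β ≠ x) : llaObj ℓ M x < llaObj ℓ M β := by
  rw [llaObj_eq_of_support hMS hx]
  by_cases hβS : ∀ e ∉ S, β e = 0
  · rw [llaObj_eq_of_support hMS hβS]
    exact hmin β hβS hβ
  push Not at hβS
  obtain ⟨e₀, he₀S, he₀⟩ := hβS
  set D := fun e => fderiv ℝ ℓ x (Pi.single e 1)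
  set h := fun e => (β e - x e) * D e + 1 / 2 * (M e * |β e|)
  have hlin : ℓ x + ∑ e, (β e - x e) * D e ≤ ℓ β := by
    have := hconv.add_fderiv_sub_le hdiff β
    rwa [ContinuousLinearMap.apply_eq_sum_mul_single] at this
  have hterm : ∀ e ∉ S, |β e| * (M e - 2 * |D e|) ≤ 2 * h e := by
    intro e he
    have := neg_abs_le (β e * D e)
    rw [abs_mul] at this
    simp only [h, hx e he, sub_zero]
    nlinarith
  have hh0 : ∀ e ∈ univ, 0 ≤ h e := by
    intro e _
    by_cases he : e ∈ S
    · simp [h, hfoc e he, D, hMS e he]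
    · nlinarith [hterm e he, hMc e he, abs_nonneg (β e)]
  have hh₀ : 0 < h e₀ := by
    nlinarith [hterm e₀ he₀S, hMc e₀ he₀S, abs_pos.mpr he₀]
  have hpos : 0 < ∑ e, h e := sum_pos' hh0 ⟨e₀, mem_univ _, hh₀⟩
  have hsplit : ∑ e, h e = ∑ e, (β e - x e) * D e + 1 / 2 * ∑ e, M e * |β e| := by
    rw [mul_sum, ← sum_add_distrib]
  rw [llaObj]
  linarith

end LLAObjective

section Graphs

variable {d : ℕ}

lemma adjM_isSymm (x : EdgeIdx d → ℝ) : (adjM x).IsSymm := by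
  refine IsSymm.ext fun i j => ?_
  rcases lt_trichotomy i j with h | rfl | h
  · simp [adjM, h, h.not_gt]
  · rfl
  · simp [adjM, h, h.not_gt]

lemma adjM_abs (x : EdgeIdx d → ℝ) (i j : Fin d) :
    adjM (fun e => |x e|) i j = |adjM x i j| := by
  simp only [adjM, of_apply]
  split_ifs <;> simp

lemma suppGraph_adj_iff (x : EdgeIdx d → ℝ) (i j : Fin d) :
    (suppGraph x).Adj i j ↔ adjM x i j ≠ 0 := by
  rw [suppGraph, SimpleGraph.fromRel_adj]
  rcases lt_trichotomy i j with h | rfl | h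
  · simp [adjM, h, h.ne, h.not_gt]
  · simp [adjM]
  · simp [adjM, h, h.ne', h.not_gt]

lemma compCard_eq_card_filter (G : SimpleGraph (Fin d)) (i : Fin d)
    [DecidablePred (G.Reachable i)] :
    compCard G i = #(univ.filter (G.Reachable i ·)) := by
  rw [compCard, Nat.card_eq_fintype_card, Fintype.card_subtype]

lemma compCard_le_maxCompCard (G : SimpleGraph (Fin d)) (i : Fin d) :
    compCard G i ≤ maxCompCard G :=
  le_sup (f := compCard G) (mem_univ i)

lemma reachable_of_suppGraph_adj {x y : EdgeIdx d → ℝ}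
    (hx : ∀ e ∉ blockSupp y, x e = 0) {i j : Fin d} (hij : (suppGraph x).Adj i j) :
    (suppGraph y).Reachable i j := by
  have hmem : ∀ e, x e ≠ 0 → (suppGraph y).Reachable e.1.1 e.1.2 := fun e he =>
    not_not.mp fun hr => he (hx e hr)
  rw [suppGraph, SimpleGraph.fromRel_adj] at hij
  obtain ⟨-, ⟨hlt, hne⟩ | ⟨hlt, hne⟩⟩ := hij
  · exact hmem _ hne
  · exact (hmem _ hne).symm

lemma reachable_of_adjM_abs_ne_zero {b : EdgeIdx d → ℝ} {G : SimpleGraph (Fin d)}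
    (href : ∀ i j, (suppGraph b).Adj i j → G.Reachable i j)
    {i j : Fin d} (hij : adjM (fun e => |b e|) i j ≠ 0) : G.Reachable i j :=
  href i j ((suppGraph_adj_iff b i j).mpr (by simpa [adjM_abs] using hij))

end Graphs

namespace IsEigenDecomp

variable {d : ℕ} {b : EdgeIdx d → ℝ} {V : Matrix (Fin d) (Fin d) ℝ} {lam : Fin d → ℝ}
  {G : SimpleGraph (Fin d)} {g g' : ℝ → ℝ} {a0 a1 b1 b2 τ : ℝ}

lemma isOrthEigenbasis {A : Matrix (Fin d) (Fin d) ℝ} (h : IsEigenDecomp A V lam) :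
    IsOrthEigenbasis A V lam :=
  ⟨h.1, h.2⟩

lemma eigenvalue_nonneg (h : IsEigenDecomp (lap fun e => |b e|) V lam) (k : Fin d) :
    0 ≤ lam k := by
  rw [h.isOrthEigenbasis.eigenvalue_eq k]
  exact dotProduct_lapM_mulVec_self_nonneg (adjM_isSymm _)
    (fun i j => by rw [adjM_abs]; exact abs_nonneg _) _

lemma apply_eq_of_reachable (h : IsEigenDecomp (lap fun e => |b e|) V lam)
    (href : ∀ i j, (suppGraph b).Adj i j → G.Reachable i j) {c : ℝ} (hc : 0 < c) {i j : Fin d}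
    (hgap : c ≤ subLapEig (fun e => |b e|) {j | G.Reachable i j} 2) {k : Fin d}
    (hk : lam k < c) (hij : G.Reachable i j) : V i k = V j k := by
  rw [subLapEig] at hgap
  let _ : Fintype {j | G.Reachable i j} := Fintype.ofFinite _
  refine eq_of_lapM_mulVec_eq_smul_of_lt_eigAsc_two (adjM_isSymm _) {j | G.Reachable i j} ?_
    (hc.trans_le hgap) (h.2 k) (hk.trans_le hgap) (SimpleGraph.Reachable.refl i) hij
  intro x hx y hy
  by_contra hxy
  exact hy (hx.trans (reachable_of_adjM_abs_ne_zero href hxy))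

lemma two_div_le_sum_ker (h : IsEigenDecomp (lap fun e => |b e|) V lam)
    (href : ∀ i j, (suppGraph b).Adj i j → G.Reachable i j) {i j : Fin d}
    (hij : ¬ G.Reachable i j) :
    2 / maxCompCard G ≤ ∑ k ∈ univ.filter (lam · = 0), (V i k - V j k) ^ 2 := by
  classical
  set S := univ.filter (G.Reachable i ·)
  set T := univ.filter (G.Reachable j ·)
  have hclosed : ∀ v : Fin d, ∀ x y, adjM (fun e => |b e|) x y ≠ 0 →
      (x ∈ univ.filter (G.Reachable v ·) ↔ y ∈ univ.filter (G.Reachable v ·)) := by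
    intro v x y hxy
    have := reachable_of_adjM_abs_ne_zero href hxy
    simpa using ⟨fun hx => hx.trans this, fun hy => hy.trans this.symm⟩
  have hST : Disjoint S T := disjoint_left.mpr fun x hxS hxT => by
    simp only [S, T, mem_filter, mem_univ, true_and] at hxS hxT
    exact hij (hxS.trans hxT.symm)
  have h4 := h.isOrthEigenbasis.four_le_mul_sum_ker (adjM_isSymm _) hST (hclosed i) (hclosed j)
    (i := i) (j := j) (by simp [S]) (by simp [T])
  have hcard : ∀ v : Fin d, (#(univ.filter (G.Reachable v ·)) : ℝ) ≤ maxCompCard G := by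
    intro v
    rw [← compCard_eq_card_filter]
    exact_mod_cast compCard_le_maxCompCard G v
  have hS : (1 : ℝ) ≤ #S := by
    exact_mod_cast card_pos.mpr ⟨i, by simp [S]⟩
  have hdm : (0 : ℝ) < maxCompCard G := by linarith [hcard i]
  rw [div_le_iff₀' hdm]
  nlinarith [hcard i, hcard j, sum_nonneg fun k (_ : k ∈ univ.filter (lam · = 0)) =>
    sq_nonneg (V i k - V j k)]

lemma lapCoeff_eq_zero (h : IsEigenDecomp (lap fun e => |b e|) V lam)
    (hg : SCADLike g g' a0 a1 b1 b2 τ) (hτ : 0 < τ)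
    (href : ∀ i j, (suppGraph b).Adj i j → G.Reachable i j)
    (hgap : ∀ v : Fin d, (∃ u, G.Adj v u) →
      b2 * τ ≤ subLapEig (fun e => |b e|) {j | G.Reachable v j} 2)
    {e : EdgeIdx d} (he : G.Reachable e.1.1 e.1.2) :
    lapCoeff V (fun k => g' (lam k)) e = 0 := by
  have hb2τ : 0 < b2 * τ := mul_pos (hg.b1_pos.trans hg.b1_lt_b2) hτ
  have hadj : ∃ u, G.Adj e.1.1 u := he.nonempty_neighborSet_left e.2.ne
  refine sum_eq_zero fun k _ => ?_
  by_cases hk : lam k < b2 * τ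
  · rw [h.apply_eq_of_reachable href hb2τ (hgap _ hadj) hk he, sub_self]
    simp
  · show g' (lam k) * _ = 0
    rw [hg.deriv_high _ (not_lt.mp hk), zero_mul]

lemma le_lapCoeff (h : IsEigenDecomp (lap fun e => |b e|) V lam)
    (hg : SCADLike g g' a0 a1 b1 b2 τ) (href : ∀ i j, (suppGraph b).Adj i j → G.Reachable i j)
    {e : EdgeIdx d} (he : ¬ G.Reachable e.1.1 e.1.2) :
    2 * (a0 * τ / maxCompCard G) ≤ lapCoeff V (fun k => g' (lam k)) e := by
  have ha0τ : 0 ≤ a0 * τ := hg.deriv_zero ▸ hg.deriv_nonneg le_rfl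
  set Z := univ.filter (lam · = 0)
  calc 2 * (a0 * τ / maxCompCard G) = a0 * τ * (2 / maxCompCard G) := by ring
    _ ≤ a0 * τ * ∑ k ∈ Z, (V e.1.1 k - V e.1.2 k) ^ 2 :=
        mul_le_mul_of_nonneg_left (h.two_div_le_sum_ker href he) ha0τ
    _ = ∑ k ∈ Z, g' (lam k) * (V e.1.1 k - V e.1.2 k) ^ 2 := by
        rw [mul_sum]
        refine sum_congr rfl fun k hk => ?_
        rw [(mem_filter.mp hk).2, hg.deriv_zero]
    _ ≤ lapCoeff V (fun k => g' (lam k)) e :=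
        sum_le_sum_of_subset_of_nonneg (subset_univ Z) fun k _ _ =>
          mul_nonneg (hg.deriv_nonneg (h.eigenvalue_nonneg k)) (sq_nonneg _)

lemma llaObj_lt (h : IsEigenDecomp (lap fun e => |b e|) V lam)
    {ℓ : (EdgeIdx d → ℝ) → ℝ} (hconv : ConvexOn ℝ Set.univ ℓ) {βstar orc : EdgeIdx d → ℝ}
    (hdiff : DifferentiableAt ℝ ℓ orc) (hg : SCADLike g g' a0 a1 b1 b2 τ) (hτ : 0 < τ)
    (horc_supp : ∀ e ∉ blockSupp βstar, orc e = 0)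
    (horc_min : ∀ β : EdgeIdx d → ℝ, (∀ e ∉ blockSupp βstar, β e = 0) → β ≠ orc →
      ℓ orc < ℓ β)
    (hfoc : ∀ e ∈ blockSupp βstar, fderiv ℝ ℓ orc (Pi.single e 1) = 0)
    (hgrad : ∀ e ∉ blockSupp βstar,
      |fderiv ℝ ℓ orc (Pi.single e 1)| < a0 * τ / (maxCompCard (suppGraph βstar) : ℝ))
    (href : ∀ i j, (suppGraph b).Adj i j → (suppGraph βstar).Reachable i j)
    (hgap : ∀ v : Fin d, (∃ u, (suppGraph βstar).Adj v u) →
      b2 * τ ≤ subLapEig (fun e => |b e|) {j | (suppGraph βstar).Reachable v j} 2)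
    (β : EdgeIdx d → ℝ) (hβ : β ≠ orc) :
    llaObj ℓ (lapCoeff V fun k => g' (lam k)) orc
      < llaObj ℓ (lapCoeff V fun k => g' (lam k)) β :=
  llaObj_lt_of_weights hconv hdiff horc_supp horc_min hfoc
    (fun _ he => h.lapCoeff_eq_zero hg hτ href hgap he)
    (fun e he => by linarith [hgrad e he, h.le_lapCoeff hg href he]) β hβ

end IsEigenDecomp

theorem stmt_2_general {d : ℕ}
    (ℓ : (EdgeIdx d → ℝ) → ℝ) (hconv : ConvexOn ℝ Set.univ ℓ) (hdiff : Differentiable ℝ ℓ)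
    (g g' : ℝ → ℝ) (a0 a1 b1 b2 τ : ℝ) (hτ : 0 < τ)
    (hg : SCADLike g g' a0 a1 b1 b2 τ)
    (βstar orc : EdgeIdx d → ℝ)
    (horc_supp : ∀ e ∉ blockSupp βstar, orc e = 0)
    (horc_min : ∀ β : EdgeIdx d → ℝ, (∀ e ∉ blockSupp βstar, β e = 0) → β ≠ orc →
      ℓ orc < ℓ β)
    (hfoc : ∀ e ∈ blockSupp βstar, fderiv ℝ ℓ orc (Pi.single e 1) = 0)
    (hgrad : ∀ e ∉ blockSupp βstar,
      |fderiv ℝ ℓ orc (Pi.single e 1)| < a0 * τ / (maxCompCard (suppGraph βstar) : ℝ)) :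
    (∀ b : EdgeIdx d → ℝ,
      (∀ i j : Fin d, (suppGraph b).Reachable i j → (suppGraph βstar).Reachable i j) →
      (∀ v : Fin d, (∃ u, (suppGraph βstar).Adj v u) →
        b2 * τ ≤ subLapEig (fun e => |b e|) {j | (suppGraph βstar).Reachable v j} 2) →
      ∀ V lam, IsEigenDecomp (lap fun e => |b e|) V lam →
        ∀ β, β ≠ orc →
          llaObj ℓ (lapCoeff V fun k => g' (lam k)) orc
            < llaObj ℓ (lapCoeff V fun k => g' (lam k)) β) ∧
    ((∀ v : Fin d, (∃ u, (suppGraph βstar).Adj v u) →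
        b2 * τ ≤ subLapEig (fun e => |orc e|) {j | (suppGraph βstar).Reachable v j} 2) →
      ∀ V lam, IsEigenDecomp (lap fun e => |orc e|) V lam →
        ∀ β, β ≠ orc →
          llaObj ℓ (lapCoeff V fun k => g' (lam k)) orc
            < llaObj ℓ (lapCoeff V fun k => g' (lam k)) β) := by
  refine ⟨fun b href hgap V lam hV => ?_, fun hgap V lam hV => ?_⟩
  · exact hV.llaObj_lt hconv (hdiff orc) hg hτ horc_supp horc_min hfoc hgrad
      (fun i j hij => href i j hij.reachable) hgap
  · exact hV.llaObj_lt hconv (hdiff orc) hg hτ horc_supp horc_min hfoc hgrad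
      (fun _ _ => reachable_of_suppGraph_adj horc_supp) hgap

/-- (one LLA step from a point whose blocks refine the target blocks and
whose per-block spectral gaps are large lands exactly on the block oracle; in particular
the block oracle is a fixed point of the LLA algorithm). -/
theorem stmt_2 {d : ℕ} (hd : 2 ≤ d)
    (ℓ : (EdgeIdx d → ℝ) → ℝ) (hconv : ConvexOn ℝ Set.univ ℓ) (hdiff : Differentiable ℝ ℓ)
    (g g' : ℝ → ℝ) (a0 a1 b1 b2 τ : ℝ) (hτ : 0 < τ)
    (hg : SCADLike g g' a0 a1 b1 b2 τ)
    (βstar orc : EdgeIdx d → ℝ)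
    (horc_supp : ∀ e ∉ blockSupp βstar, orc e = 0)
    (horc_min : ∀ β : EdgeIdx d → ℝ, (∀ e ∉ blockSupp βstar, β e = 0) → β ≠ orc →
      ℓ orc < ℓ β)
    (hfoc : ∀ e ∈ blockSupp βstar, fderiv ℝ ℓ orc (Pi.single e 1) = 0)
    (hgrad : ∀ e ∉ blockSupp βstar,
      |fderiv ℝ ℓ orc (Pi.single e 1)| < a0 * τ / (maxCompCard (suppGraph βstar) : ℝ)) :
    (∀ b : EdgeIdx d → ℝ,
      (∀ i j : Fin d, (suppGraph b).Reachable i j → (suppGraph βstar).Reachable i j) →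
      (∀ v : Fin d, (∃ u, (suppGraph βstar).Adj v u) →
        b2 * τ ≤ subLapEig (fun e => |b e|) {j | (suppGraph βstar).Reachable v j} 2) →
      ∀ V lam, IsEigenDecomp (lap fun e => |b e|) V lam →
        ∀ β, β ≠ orc →
          llaObj ℓ (lapCoeff V fun k => g' (lam k)) orc
            < llaObj ℓ (lapCoeff V fun k => g' (lam k)) β) ∧
    ((∀ v : Fin d, (∃ u, (suppGraph βstar).Adj v u) →
        b2 * τ ≤ subLapEig (fun e => |orc e|) {j | (suppGraph βstar).Reachable v j} 2) →
      ∀ V lam, IsEigenDecomp (lap fun e => |orc e|) V lam →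
        ∀ β, β ≠ orc →
          llaObj ℓ (lapCoeff V fun k => g' (lam k)) orc
            < llaObj ℓ (lapCoeff V fun k => g' (lam k)) β) :=
  stmt_2_general ℓ hconv hdiff g g' a0 a1 b1 b2 τ hτ hg βstar orc horc_supp horc_min hfoc hgrad

end FCLS
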